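/- Let G be a benzenoid system with a perfect matching, let Q be an induced convex subgraph of R(G) isomorphic to Q_{k,l} with vertices identified with tuples as in the standard representation. Let M be the all-zero vertex; for j ∈ {1,…,k+l} let N^j be the vertex with 1 in position j and 0 elsewhere and h_j the hexagon with M ⊕ N^j = E(h_j); for i ∈ {k+1,…,k+l} let O^i be the vertex with 2 in position i and 0 elsewhere and h_i' the hexagon with N^i ⊕ O^i = E(h_i'). Then for every i ∈ {k+1,…,k+l} and every j ∈ {1,…,k+l} with j ≠ i, the hexagons h_i' and h_j are vertex-disjoint. -/

import Mathlib

open scoped symmDiff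

namespace GZZ

/-! ### Cells (hexagonal faces) of the hexagonal lattice in "brick wall" coordinates.

A vertex of the hexagonal lattice is a pair `(x, y) : ℤ × ℤ`; horizontal edges join
`(x, y)` and `(x + 1, y)`, and vertical edges join `(x, y)` and `(x, y + 1)` for `x + y` even.
The hexagonal faces of the lattice are indexed by their lower-left vertex `c`
(with `c.1 + c.2` even). -/

abbrev V2 := ℤ × ℤ

/-- The six vertices of the hexagonal face with lower-left corner `c`. -/
def cellVerts (c : V2) : Set V2 :=
  {(c.1, c.2), (c.1 + 1, c.2), (c.1 + 2, c.2),
   (c.1, c.2 + 1), (c.1 + 1, c.2 + 1), (c.1 + 2, c.2 + 1)}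

/-- The six edges of the hexagonal face with lower-left corner `c`. -/
def cellEdges (c : V2) : Set (Sym2 V2) :=
  {s((c.1, c.2), (c.1 + 1, c.2)), s((c.1 + 1, c.2), (c.1 + 2, c.2)),
   s((c.1, c.2 + 1), (c.1 + 1, c.2 + 1)), s((c.1 + 1, c.2 + 1), (c.1 + 2, c.2 + 1)),
   s((c.1, c.2), (c.1, c.2 + 1)), s((c.1 + 2, c.2), (c.1 + 2, c.2 + 1))}

/-- Two hexagonal faces are adjacent when they share an edge. -/
def cellAdj (c d : V2) : Prop :=
  (d.1 - c.1, d.2 - c.2) ∈ ({(2, 0), (-2, 0), (1, 1), (1, -1), (-1, 1), (-1, -1)} : Set V2)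

/-- A set of hexagonal faces is connected (via sharing edges). -/
def CellConnected (S : Set V2) : Prop :=
  ∀ c ∈ S, ∀ d ∈ S, Relation.ReflTransGen (fun a b => a ∈ S ∧ b ∈ S ∧ cellAdj a b) c d

/-- A benzenoid system, given by its (finite, nonempty) set `B` of hexagonal faces:
the faces form a connected set and the complement has no holes (it is connected),
which is exactly the condition that `B` consists of all hexagons lying in the region
bounded by a cycle of the hexagonal lattice. -/
def IsBenzenoid (B : Set V2) : Prop :=
  B.Finite ∧ B.Nonempty ∧ (∀ c ∈ B, Even (c.1 + c.2)) ∧ CellConnected B ∧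
    CellConnected {c : V2 | Even (c.1 + c.2) ∧ c ∉ B}

section Generic

/-! ### Perfect matchings, resonance graphs and generalized Clar covers,
generically in a system of hexagonal cells `B` with vertex sets `cv` and edge sets `ce`. -/

variable {V C : Type*} (cv : C → Set V) (ce : C → Set (Sym2 V)) (B : Set C)

/-- The vertices of the system with cell set `B`. -/
def sysVerts : Set V := ⋃ c ∈ B, cv c

/-- The edges of the system with cell set `B`. -/
def sysEdges : Set (Sym2 V) := ⋃ c ∈ B, ce c

/-- A perfect matching: a set of pairwise non-incident edges of the system
covering all vertices of the system. -/
def IsPM (M : Set (Sym2 V)) : Prop :=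
  M ⊆ sysEdges ce B ∧
    (∀ e ∈ M, ∀ f ∈ M, e ≠ f → ∀ v : V, v ∈ e → v ∉ f) ∧
    (∀ v ∈ sysVerts cv B, ∃ e ∈ M, v ∈ e)

/-- The type of perfect matchings of the system. -/
abbrev PM := {M : Set (Sym2 V) // IsPM cv ce B M}

/-- The resonance graph: vertices are the perfect matchings, two perfect matchings
being adjacent whenever their symmetric difference is the edge set of a hexagon. -/
def resGraph : SimpleGraph (PM cv ce B) where
  Adj M N := M ≠ N ∧ ∃ c ∈ B, (M.val ∆ N.val) = ce c
  symm := by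
    constructor
    rintro M N ⟨hne, c, hc, hd⟩
    exact ⟨hne.symm, c, hc, by rwa [symmDiff_comm]⟩
  loopless := ⟨fun M h => h.1 rfl⟩

/-- The connected component (vertex set) of `v` in the spanning subgraph with edge set `E'`. -/
def compSet (E' : Set (Sym2 V)) (v : V) : Set V :=
  {w | (SimpleGraph.fromEdgeSet E').Reachable v w}

/-- The component of `v` in the spanning subgraph with edge set `E'` is a single edge `K₂`. -/
def IsK2Comp (E' : Set (Sym2 V)) (v : V) : Prop :=
  ∃ u w : V, u ≠ w ∧ s(u, w) ∈ E' ∧ compSet E' v = {u, w}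

/-- The component of `v` in the spanning subgraph with edge set `E'` is a cycle `Cₙ`. -/
def IsCycComp (n : ℕ) [NeZero n] (E' : Set (Sym2 V)) (v : V) : Prop :=
  ∃ c : ZMod n → V, Function.Injective c ∧ compSet E' v = Set.range c ∧
    (∀ i : ZMod n, s(c i, c (i + 1)) ∈ E') ∧
    (∀ e ∈ E', (∀ u, u ∈ e → u ∈ Set.range c) → ∃ i : ZMod n, e = s(c i, c (i + 1)))

/-- The number of `Cₙ`-components of the spanning subgraph with edge set `E'`. -/
noncomputable def numCyc (n : ℕ) [NeZero n] (Vs : Set V) (E' : Set (Sym2 V)) : ℕ :=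
  Set.ncard {S : Set V | ∃ v ∈ Vs, IsCycComp n E' v ∧ S = compSet E' v}

/-- A generalized Clar cover: a spanning subgraph (given by its edge set `E'`) of the
system each of whose connected components is a `C₆`, a `C₁₀` or a `K₂`. -/
def IsGenClarCover (E' : Set (Sym2 V)) : Prop :=
  E' ⊆ sysEdges ce B ∧
    ∀ v ∈ sysVerts cv B, IsK2Comp E' v ∨ IsCycComp 6 E' v ∨ IsCycComp 10 E' v

/-- `gz B k l`: the number of generalized Clar covers with exactly `k` components `C₆`
and `l` components `C₁₀`. -/
noncomputable def gz (k l : ℕ) : ℕ :=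
  Set.ncard {E' : Set (Sym2 V) | IsGenClarCover cv ce B E' ∧
    numCyc 6 (sysVerts cv B) E' = k ∧ numCyc 10 (sysVerts cv B) E' = l}

/-- The set of vertices of the resonance graph assigned by the map `f_{k,l}` to a
generalized Clar cover `E'`: all perfect matchings `M` such that `|M ∩ E(c)| = 3` for every
`C₆`-component (a hexagon) `c` of `E'`, `|M ∩ (E(h₁) ∪ E(h₂))| = 5` for every
`C₁₀`-component of `E'` formed by two hexagons `h₁, h₂`, and every `K₂`-component edge
of `E'` belongs to `M`. -/
def fSet (E' : Set (Sym2 V)) : Set (PM cv ce B) :=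
  {M | (∀ v ∈ sysVerts cv B, IsCycComp 6 E' v → ∀ h ∈ B, compSet E' v = cv h →
          Set.ncard (M.val ∩ ce h) = 3) ∧
       (∀ v ∈ sysVerts cv B, IsCycComp 10 E' v → ∀ h₁ ∈ B, ∀ h₂ ∈ B, h₁ ≠ h₂ →
          compSet E' v = cv h₁ ∪ cv h₂ →
          Set.ncard (M.val ∩ (ce h₁ ∪ ce h₂)) = 5) ∧
       (∀ u w : V, s(u, w) ∈ E' → compSet E' u = {u, w} → s(u, w) ∈ M.val)}

end Generic

/-! ### The graphs `Q_{k,l}` and the generalized cube polynomial. -/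

/-- The Cartesian (box) product of `n` copies of a graph `G`. -/
def boxPow {α : Type*} (G : SimpleGraph α) : (n : ℕ) → SimpleGraph (Fin n → α)
  | 0 => ⊥
  | n + 1 =>
    SimpleGraph.comap (fun f => (fun i => f i.castSucc, f (Fin.last n)))
      ((boxPow G n).boxProd G)

/-- The graph `Q_{k,l} = P₂^k □ P₃^l`. -/
def QGraph (k l : ℕ) : SimpleGraph ((Fin k → Fin 2) × (Fin l → Fin 3)) :=
  (boxPow (SimpleGraph.pathGraph 2) k).boxProd (boxPow (SimpleGraph.pathGraph 3) l)

/-- A set of vertices is convex if every shortest path between two of its vertices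
stays inside it. -/
def IsConvex {W : Type*} (G : SimpleGraph W) (S : Set W) : Prop :=
  ∀ u v : W, u ∈ S → v ∈ S → ∀ p : G.Walk u v, p.IsPath → p.length = G.dist u v →
    ∀ w ∈ p.support, w ∈ S

/-- `alphaQ G k l`: the number of induced convex subgraphs of `G` isomorphic to `Q_{k,l}`. -/
noncomputable def alphaQ {W : Type*} (G : SimpleGraph W) (k l : ℕ) : ℕ :=
  Set.ncard {S : Set W | IsConvex G S ∧ Nonempty (G.induce S ≃g QGraph k l)}

end GZZ
namespace GZZ

/-- The "tuple" description of `Q_{k,l}`: vertices are tuples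
`(b₁, …, b_k, b_{k+1}, …, b_{k+l})` with `bᵢ ∈ {0,1}` for `i ≤ k` and `bᵢ ∈ {0,1,2}` for
`i > k`, two tuples being adjacent iff they differ by exactly `1` in exactly one
coordinate. -/
def tupleGraph (k l : ℕ) : SimpleGraph ((Fin k → Fin 2) × (Fin l → Fin 3)) where
  Adj p q :=
    (∃ i : Fin k, ((p.1 i : ℕ) = (q.1 i : ℕ) + 1 ∨ (q.1 i : ℕ) = (p.1 i : ℕ) + 1) ∧
      (∀ j : Fin k, j ≠ i → p.1 j = q.1 j) ∧ p.2 = q.2) ∨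
    (∃ i : Fin l, ((p.2 i : ℕ) = (q.2 i : ℕ) + 1 ∨ (q.2 i : ℕ) = (p.2 i : ℕ) + 1) ∧
      (∀ j : Fin l, j ≠ i → p.2 j = q.2 j) ∧ p.1 = q.1)
  symm := by
    constructor
    rintro p q (⟨i, hd, hj, h2⟩ | ⟨i, hd, hj, h2⟩)
    · exact Or.inl ⟨i, hd.symm, fun j hji => (hj j hji).symm, h2.symm⟩
    · exact Or.inr ⟨i, hd.symm, fun j hji => (hj j hji).symm, h2.symm⟩
  loopless := by
    constructor
    rintro p (⟨i, hd, -, -⟩ | ⟨i, hd, -, -⟩) <;> omega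

end GZZ

namespace GZZ

open SimpleGraph

/-!
The tuples `0, Nⁱ, Oⁱ` and `Nʲ, Nʲ + Nⁱ, Nʲ + 2Nⁱ` span a ladder `P₂ □ P₃` in `Q_{k,l}`, hence in
the resonance graph. Two distinct hexagons share at most one edge, so
`E(a) ∆ E(b) = E(c) ∆ E(d)` forces `{a, b} = {c, d}`: opposite edges of a 4-cycle of the resonance
graph carry the same hexagon, and all three rungs of the ladder carry `hⱼ`. A common vertex `v` of
`hᵢ'` and `hⱼ` would then be matched, in `Nⁱ` as well as in `Oⁱ`, along an edge lying in both
hexagons, that is, along their unique common edge; but that edge lies in `Nⁱ ⊕ Oⁱ = E(hᵢ')`.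
-/

-- A lattice edge is determined by the sum of its endpoints (twice its midpoint).
def edgeSum (e : Sym2 V2) : V2 := Sym2.lift ⟨fun a b => a + b, add_comm⟩ e

@[simp] lemma edgeSum_mk (a b : V2) : edgeSum s(a, b) = a + b := rfl

lemma edgeSum_of_mem_cellEdges {e : Sym2 V2} {c : V2} (h : e ∈ cellEdges c) :
    (((edgeSum e).1 = 2 * c.1 + 1 ∨ (edgeSum e).1 = 2 * c.1 + 3) ∧
      ((edgeSum e).2 = 2 * c.2 ∨ (edgeSum e).2 = 2 * c.2 + 2)) ∨
    (((edgeSum e).1 = 2 * c.1 ∨ (edgeSum e).1 = 2 * c.1 + 4) ∧ (edgeSum e).2 = 2 * c.2 + 1) := by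
  simp only [cellEdges, Set.mem_insert_iff, Set.mem_singleton_iff] at h
  rcases h with rfl | rfl | rfl | rfl | rfl | rfl <;>
    simp only [edgeSum_mk, Prod.fst_add, Prod.snd_add] <;> omega

lemma eq_of_edgeSum_eq {e₁ e₂ : Sym2 V2} {c d : V2} (h₁ : e₁ ∈ cellEdges c)
    (h₂ : e₂ ∈ cellEdges d) (h : edgeSum e₁ = edgeSum e₂) : e₁ = e₂ := by
  simp only [cellEdges, Set.mem_insert_iff, Set.mem_singleton_iff] at h₁ h₂
  rcases h₁ with rfl | rfl | rfl | rfl | rfl | rfl <;>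
    rcases h₂ with rfl | rfl | rfl | rfl | rfl | rfl <;>
    simp only [edgeSum_mk, Prod.ext_iff, Prod.fst_add, Prod.snd_add] at h <;>
    simp only [Sym2.eq_iff, Prod.mk.injEq] <;> omega

lemma cellEdges_inter_subsingleton {c d : V2} (hc : Even (c.1 + c.2)) (hd : Even (d.1 + d.2))
    (hcd : c ≠ d) : (cellEdges c ∩ cellEdges d).Subsingleton := by
  rintro e₁ ⟨h₁c, h₁d⟩ e₂ ⟨h₂c, h₂d⟩
  obtain ⟨m, hm⟩ := hc
  obtain ⟨n, hn⟩ := hd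
  rw [ne_eq, Prod.ext_iff] at hcd
  refine eq_of_edgeSum_eq h₁c h₂c (Prod.ext ?_ ?_) <;>
  · have := edgeSum_of_mem_cellEdges h₁c; have := edgeSum_of_mem_cellEdges h₁d
    have := edgeSum_of_mem_cellEdges h₂c; have := edgeSum_of_mem_cellEdges h₂d
    omega

lemma cellEdges_injective : Function.Injective cellEdges := by
  intro c d h
  have h₁ := edgeSum_of_mem_cellEdges
    (h ▸ (by simp [cellEdges] : s(c, (c.1 + 1, c.2)) ∈ cellEdges c))
  have h₂ := edgeSum_of_mem_cellEdges
    (h ▸ (by simp [cellEdges] : s(c, (c.1, c.2 + 1)) ∈ cellEdges c))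
  simp only [edgeSum_mk, Prod.fst_add, Prod.snd_add] at h₁ h₂
  rw [Prod.ext_iff]
  omega

lemma encard_cellEdges (c : V2) : (cellEdges c).encard = 6 := by
  norm_num [cellEdges, Set.encard_insert_of_notMem, Prod.ext_iff]

lemma exists_ne_mem_cellEdges_of_mem_cellVerts {c v : V2} (hv : v ∈ cellVerts c) :
    ∃ d₁ ∈ cellEdges c, ∃ d₂ ∈ cellEdges c, d₁ ≠ d₂ ∧ v ∈ d₁ ∧ v ∈ d₂ := by
  obtain ⟨x, y⟩ := c
  simp only [cellVerts, Set.mem_insert_iff, Set.mem_singleton_iff] at hv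
  rcases hv with rfl | rfl | rfl | rfl | rfl | rfl
  · refine ⟨s((x, y), (x + 1, y)), ?_, s((x, y), (x, y + 1)), ?_, ?_, ?_, ?_⟩ <;>
      simp [cellEdges]
  · refine ⟨s((x, y), (x + 1, y)), ?_, s((x + 1, y), (x + 2, y)), ?_, ?_, ?_, ?_⟩ <;>
      simp [cellEdges]
  · refine ⟨s((x + 1, y), (x + 2, y)), ?_, s((x + 2, y), (x + 2, y + 1)), ?_, ?_, ?_, ?_⟩ <;>
      simp [cellEdges]
  · refine ⟨s((x, y + 1), (x + 1, y + 1)), ?_, s((x, y), (x, y + 1)), ?_, ?_, ?_, ?_⟩ <;>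
      simp [cellEdges]
  · refine ⟨s((x, y + 1), (x + 1, y + 1)), ?_, s((x + 1, y + 1), (x + 2, y + 1)), ?_, ?_, ?_,
      ?_⟩ <;> simp [cellEdges]
  · refine ⟨s((x + 1, y + 1), (x + 2, y + 1)), ?_, s((x + 2, y), (x + 2, y + 1)), ?_, ?_, ?_,
      ?_⟩ <;> simp [cellEdges]

lemma eq_of_cellEdges_symmDiff_eq {a b c d : V2} (ha : Even (a.1 + a.2))
    (hb : Even (b.1 + b.2)) (hc : Even (c.1 + c.2)) (hd : Even (d.1 + d.2)) (hab : a ≠ b)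
    (hac : a ≠ c) (h : cellEdges a ∆ cellEdges b = cellEdges c ∆ cellEdges d) : d = a := by
  by_contra hda
  have hcover : cellEdges a ⊆ (cellEdges a ∩ cellEdges b) ∪ (cellEdges a ∩ cellEdges c) ∪
      (cellEdges a ∩ cellEdges d) := by
    intro e hea
    by_cases heb : e ∈ cellEdges b
    · exact Or.inl (Or.inl ⟨hea, heb⟩)
    · have : e ∈ cellEdges c ∆ cellEdges d := h ▸ Set.mem_symmDiff.mpr (Or.inl ⟨hea, heb⟩)
      rcases Set.mem_symmDiff.mp this with ⟨hec, -⟩ | ⟨hed, -⟩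
      · exact Or.inl (Or.inr ⟨hea, hec⟩)
      · exact Or.inr ⟨hea, hed⟩
  have hsmall : ∀ x, Even (x.1 + x.2) → a ≠ x → (cellEdges a ∩ cellEdges x).encard ≤ 1 :=
    fun x hx hax => Set.encard_le_one_iff_subsingleton.mpr (cellEdges_inter_subsingleton ha hx hax)
  have : (cellEdges a).encard ≤ 3 := calc
    _ ≤ (cellEdges a ∩ cellEdges b ∪ cellEdges a ∩ cellEdges c ∪
          cellEdges a ∩ cellEdges d).encard := Set.encard_le_encard hcover
    _ ≤ (cellEdges a ∩ cellEdges b).encard + (cellEdges a ∩ cellEdges c).encard +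
          (cellEdges a ∩ cellEdges d).encard :=
        (Set.encard_union_le _ _).trans (by gcongr; exact Set.encard_union_le _ _)
    _ ≤ 1 + 1 + 1 := by
        gcongr
        exacts [hsmall b hb hab, hsmall c hc hac, hsmall d hd (Ne.symm hda)]
    _ = 3 := by norm_num
  rw [encard_cellEdges] at this
  norm_num at this

lemma IsPM.eq_of_mem_of_mem {V C : Type*} {cv : C → Set V} {ce : C → Set (Sym2 V)} {B : Set C}
    {M : Set (Sym2 V)} (hM : IsPM cv ce B M) {e f : Sym2 V} {v : V} (he : e ∈ M) (hf : f ∈ M)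
    (hve : v ∈ e) (hvf : v ∈ f) : e = f :=
  by_contra fun hef => hM.2.1 e he f hf hef v hve hvf

section PerfectMatching

variable {B : Set V2}

-- `v` lies on two edges of the hexagon and `M'` covers at most one of them.
lemma IsPM.exists_mem_cellEdges_of_symmDiff_eq {M M' : Set (Sym2 V2)}
    (hM' : IsPM cellVerts cellEdges B M') {c v : V2} (h : M ∆ M' = cellEdges c)
    (hv : v ∈ cellVerts c) : ∃ e ∈ M, e ∈ cellEdges c ∧ v ∈ e := by
  obtain ⟨d₁, hd₁, d₂, hd₂, hd, hv₁, hv₂⟩ := exists_ne_mem_cellEdges_of_mem_cellVerts hv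
  rw [← h] at hd₁ hd₂
  rcases Set.mem_symmDiff.mp hd₁ with ⟨h₁, -⟩ | ⟨h₁', -⟩
  · exact ⟨d₁, h₁, h ▸ hd₁, hv₁⟩
  rcases Set.mem_symmDiff.mp hd₂ with ⟨h₂, -⟩ | ⟨h₂', -⟩
  · exact ⟨d₂, h₂, h ▸ hd₂, hv₂⟩
  exact absurd (hM'.eq_of_mem_of_mem h₁' h₂' hv₁ hv₂) hd

lemma IsPM.exists_mem_inter_cellEdges {X Y Z : Set (Sym2 V2)} (hX : IsPM cellVerts cellEdges B X)
    (hY : IsPM cellVerts cellEdges B Y) (hZ : IsPM cellVerts cellEdges B Z) {a b v : V2}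
    (hXY : X ∆ Y = cellEdges a) (hXZ : X ∆ Z = cellEdges b) (hva : v ∈ cellVerts a)
    (hvb : v ∈ cellVerts b) : ∃ e ∈ X, e ∈ cellEdges a ∩ cellEdges b := by
  obtain ⟨e, heX, hea, hve⟩ := hY.exists_mem_cellEdges_of_symmDiff_eq hXY hva
  obtain ⟨f, hfX, hfb, hvf⟩ := hZ.exists_mem_cellEdges_of_symmDiff_eq hXZ hvb
  exact ⟨e, heX, hea, hX.eq_of_mem_of_mem heX hfX hve hvf ▸ hfb⟩

lemma disjoint_cellVerts_of_symmDiff_eq {P Q R T : Set (Sym2 V2)}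
    (hP : IsPM cellVerts cellEdges B P) (hQ : IsPM cellVerts cellEdges B Q)
    (hR : IsPM cellVerts cellEdges B R) (hT : IsPM cellVerts cellEdges B T) {a b : V2}
    (ha : Even (a.1 + a.2)) (hb : Even (b.1 + b.2)) (hab : a ≠ b) (hPQ : P ∆ Q = cellEdges a)
    (hPR : P ∆ R = cellEdges b) (hQT : Q ∆ T = cellEdges b) :
    Disjoint (cellVerts a) (cellVerts b) := by
  refine Set.disjoint_left.mpr fun v hva hvb => ?_
  obtain ⟨e, heP, he⟩ := hP.exists_mem_inter_cellEdges hQ hR hPQ hPR hva hvb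
  obtain ⟨f, hfQ, hf⟩ :=
    hQ.exists_mem_inter_cellEdges hP hT (symmDiff_comm P Q ▸ hPQ) hQT hva hvb
  have hef : e = f := cellEdges_inter_subsingleton ha hb hab he hf
  have hePQ : e ∈ P ∆ Q := hPQ ▸ he.1
  rcases Set.mem_symmDiff.mp hePQ with ⟨-, heQ⟩ | ⟨-, heP'⟩
  · exact heQ (hef ▸ hfQ)
  · exact heP' heP

end PerfectMatching

lemma cells_eq_of_symmDiff_square {P Q R T : Set (Sym2 V2)} {a b c d : V2}
    (ha : Even (a.1 + a.2)) (hb : Even (b.1 + b.2)) (hc : Even (c.1 + c.2))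
    (hd : Even (d.1 + d.2)) (hPR : P ≠ R) (hQT : Q ≠ T) (hPQ : P ∆ Q = cellEdges a)
    (hQR : Q ∆ R = cellEdges b) (hPT : P ∆ T = cellEdges c) (hTR : T ∆ R = cellEdges d) :
    d = a ∧ b = c := by
  have hab : cellEdges a ∆ cellEdges b = P ∆ R := by
    rw [← hPQ, ← hQR, symmDiff_assoc, symmDiff_symmDiff_cancel_left]
  have hcd : cellEdges c ∆ cellEdges d = P ∆ R := by
    rw [← hPT, ← hTR, symmDiff_assoc, symmDiff_symmDiff_cancel_left]
  have hab' : a ≠ b := by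
    rintro rfl
    exact hPR (symmDiff_eq_bot.mp (hab.symm.trans (symmDiff_self _)))
  have hac : a ≠ c := by
    rintro rfl
    exact hQT (symmDiff_right_injective P (hPQ.trans hPT.symm))
  have hda := eq_of_cellEdges_symmDiff_eq ha hb hc hd hab' hac (hab.trans hcd.symm)
  refine ⟨hda, cellEdges_injective (symmDiff_right_injective (cellEdges a) ?_)⟩
  change cellEdges a ∆ cellEdges b = cellEdges a ∆ cellEdges c
  rw [hab, ← hcd, hda, symmDiff_comm]

abbrev ladder : SimpleGraph (Fin 2 × Fin 3) := (pathGraph 2).boxProd (pathGraph 3)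

theorem disjoint_cellVerts_of_ladder {B : Set V2} (hB : ∀ c ∈ B, Even (c.1 + c.2))
    (f : ladder →g resGraph cellVerts cellEdges B) (hf : Function.Injective f)
    {c c' : V2} (hc : (f (0, 0)).val ∆ (f (1, 0)).val = cellEdges c)
    (hc' : (f (0, 1)).val ∆ (f (0, 2)).val = cellEdges c') :
    Disjoint (cellVerts c') (cellVerts c) := by
  have cell : ∀ p q, (hpq : ladder.Adj p q := by simp [boxProd_adj, pathGraph_adj]) →
      ∃ d, (f p).val ∆ (f q).val = cellEdges d := fun _ _ hpq =>
    let ⟨d, _, hd⟩ := (f.map_adj hpq).2; ⟨d, hd⟩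
  have even : ∀ p q d, (f p).val ∆ (f q).val = cellEdges d →
      (hpq : ladder.Adj p q := by simp [boxProd_adj, pathGraph_adj]) → Even (d.1 + d.2) :=
    fun _ _ _ hd hpq => by
      obtain ⟨d', hd'B, hd'⟩ := (f.map_adj hpq).2
      exact cellEdges_injective (hd'.symm.trans hd) ▸ hB d' hd'B
  have ne : ∀ p q, (hpq : p ≠ q := by decide) → (f p).val ≠ (f q).val :=
    fun _ _ hpq h => hpq (hf (Subtype.ext h))
  obtain ⟨r₁, hr₁⟩ := cell (0, 1) (1, 1)
  obtain ⟨r₂, hr₂⟩ := cell (0, 2) (1, 2)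
  obtain ⟨s₀, hs₀⟩ := cell (1, 0) (1, 1)
  obtain ⟨s₁, hs₁⟩ := cell (1, 1) (1, 2)
  obtain ⟨t₀, ht₀⟩ := cell (0, 0) (0, 1)
  have hr₁c : r₁ = c := (cells_eq_of_symmDiff_square (even _ _ _ hc) (even _ _ _ hs₀)
    (even _ _ _ ht₀) (even _ _ _ hr₁) (ne _ _) (ne _ _) hc hs₀ ht₀ hr₁).1
  subst hr₁c
  have hr₂c : r₂ = r₁ := (cells_eq_of_symmDiff_square (even _ _ _ hc') (even _ _ _ hr₂)
    (even _ _ _ hr₁) (even _ _ _ hs₁) (ne _ _) (ne _ _) hc' hr₂ hr₁ hs₁).2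
  subst hr₂c
  have hc'r : c' ≠ r₂ := by
    rintro rfl
    exact ne (0, 2) (1, 1) (by decide) (symmDiff_right_injective _ (hc'.trans hr₁.symm))
  exact disjoint_cellVerts_of_symmDiff_eq (f (0, 1)).prop (f (0, 2)).prop (f (1, 1)).prop
    (f (1, 2)).prop (even _ _ _ hc') (even _ _ _ hr₁) hc'r hc' hr₁ hr₂

section Tuples

variable {k l : ℕ}

def setSnd (p : (Fin k → Fin 2) × (Fin l → Fin 3)) (i : Fin l) (x : Fin 3) :
    (Fin k → Fin 2) × (Fin l → Fin 3) :=
  (p.1, Function.update p.2 i x)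

lemma setSnd_eq_self {p : (Fin k → Fin 2) × (Fin l → Fin 3)} {i : Fin l} {x : Fin 3}
    (h : p.2 i = x) : setSnd p i x = p := by
  simp [setSnd, ← h]

lemma tupleGraph_adj_setSnd (p : (Fin k → Fin 2) × (Fin l → Fin 3)) (i : Fin l) {x y : Fin 3}
    (h : (y : ℕ) = x + 1) : (tupleGraph k l).Adj (setSnd p i x) (setSnd p i y) :=
  Or.inr ⟨i, Or.inr (by simpa [setSnd] using h), fun j hj => by simp [setSnd, hj], rfl⟩

lemma tupleGraph_adj_setSnd_setSnd {p q : (Fin k → Fin 2) × (Fin l → Fin 3)}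
    (hpq : (tupleGraph k l).Adj p q) {i : Fin l} (hi : p.2 i = q.2 i) (x : Fin 3) :
    (tupleGraph k l).Adj (setSnd p i x) (setSnd q i x) := by
  rcases hpq with ⟨a, hd, hj, h2⟩ | ⟨b, hd, hj, h1⟩
  · exact Or.inl ⟨a, hd, hj, by simp [setSnd, h2]⟩
  · have hbi : b ≠ i := by
      rintro rfl
      rw [hi] at hd
      omega
    refine Or.inr ⟨b, by simpa [setSnd, hbi] using hd, fun j hjb => ?_, h1⟩
    by_cases hji : j = i
    · simp [setSnd, hji]
    · simp [setSnd, hji, hj j hjb]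

variable {p q : (Fin k → Fin 2) × (Fin l → Fin 3)} {i : Fin l}

def ladderHom (hpq : (tupleGraph k l).Adj p q) (hi : p.2 i = q.2 i) :
    ladder →g tupleGraph k l where
  toFun v := setSnd (![p, q] v.1) i v.2
  map_rel' {u v} huv := by
    obtain ⟨a, x⟩ := u
    obtain ⟨b, y⟩ := v
    rcases boxProd_adj.mp huv with ⟨hab, rfl : x = y⟩ | ⟨hxy, rfl : a = b⟩
    · dsimp only at hab
      rcases pathGraph_adj.mp hab with h | h
      · obtain ⟨rfl, rfl⟩ : a = 0 ∧ b = 1 := by omega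
        exact tupleGraph_adj_setSnd_setSnd hpq hi x
      · obtain ⟨rfl, rfl⟩ : a = 1 ∧ b = 0 := by omega
        exact (tupleGraph_adj_setSnd_setSnd hpq hi x).symm
    · rcases pathGraph_adj.mp hxy with h | h
      · exact tupleGraph_adj_setSnd _ i h.symm
      · exact (tupleGraph_adj_setSnd _ i h.symm).symm

lemma ladderHom_injective (hpq : (tupleGraph k l).Adj p q) (hi : p.2 i = q.2 i) :
    Function.Injective (ladderHom hpq hi) := by
  rintro ⟨a, x⟩ ⟨b, y⟩ h
  obtain rfl : x = y := by simpa [ladderHom, setSnd] using congrArg (fun t => t.2 i) h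
  have hne := (tupleGraph_adj_setSnd_setSnd hpq hi x).ne
  fin_cases a <;> fin_cases b
  · rfl
  · exact absurd h hne
  · exact absurd h.symm hne
  · rfl

end Tuples

theorem hexagon_prime_disjoint_general (B : Set V2) (hB : IsBenzenoid B) (k l : ℕ)
    (S : Set (PM cellVerts cellEdges B))
    (φ : tupleGraph k l ≃g (resGraph cellVerts cellEdges B).induce S)
    (N : Fin k ⊕ Fin l → (Fin k → Fin 2) × (Fin l → Fin 3))
    (hNk : ∀ i : Fin k, N (Sum.inl i) = (fun j => if j = i then 1 else 0, fun _ => 0))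
    (hNl : ∀ i : Fin l, N (Sum.inr i) = (fun _ => 0, fun j => if j = i then 1 else 0))
    (h : Fin k ⊕ Fin l → V2)
    (hhex : ∀ i, (φ (fun _ => 0, fun _ => 0)).val.val ∆ (φ (N i)).val.val = cellEdges (h i))
    (h' : Fin l → V2)
    (hhex' : ∀ i : Fin l,
      (φ (N (Sum.inr i))).val.val ∆
        (φ (fun _ => 0, fun j => if j = i then 2 else 0)).val.val = cellEdges (h' i)) :
    ∀ (i : Fin l) (j : Fin k ⊕ Fin l), j ≠ Sum.inr i →
      cellVerts (h' i) ∩ cellVerts (h j) = ∅ := by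
  intro i j hji
  set M : (Fin k → Fin 2) × (Fin l → Fin 3) := (fun _ => 0, fun _ => 0)
  have hsetSnd : ∀ x, setSnd M i x = (fun _ => 0, fun j => if j = i then x else 0) := fun x =>
    Prod.ext rfl (funext fun j => by simp [setSnd, Function.update_apply, M])
  have hNj : (N j).2 i = 0 := by
    rcases j with a | b
    · simp [hNk]
    · have hbi : b ≠ i := fun hbi => hji (hbi ▸ rfl)
      simp [hNl, hbi.symm]
  have hadj : (tupleGraph k l).Adj M (N j) := by
    rcases j with a | b
    · exact hNk a ▸ Or.inl ⟨a, Or.inr (by simp [M]), fun c hc => by simp [M, hc], rfl⟩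
    · exact hNl b ▸ Or.inr ⟨b, Or.inr (by simp [M]), fun c hc => by simp [M, hc], rfl⟩
  let f : ladder →g resGraph cellVerts cellEdges B :=
    (Embedding.induce S).toHom.comp (φ.toHom.comp (ladderHom hadj hNj.symm))
  have hf : Function.Injective f :=
    (Embedding.induce (G := resGraph cellVerts cellEdges B) S).injective.comp
    (φ.injective.comp (ladderHom_injective hadj hNj.symm))
  refine Set.disjoint_iff_inter_eq_empty.mp (disjoint_cellVerts_of_ladder hB.2.2.1 f hf ?_ ?_)
  · change (φ (setSnd M i 0)).val.val ∆ (φ (setSnd (N j) i 0)).val.val = _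
    rw [setSnd_eq_self rfl, setSnd_eq_self hNj]
    exact hhex j
  · change (φ (setSnd M i 1)).val.val ∆ (φ (setSnd M i 2)).val.val = _
    rw [hsetSnd, hsetSnd, ← hNl]
    exact hhex' i

/-- **Claim 3.** With the notation of the previous claims (`hⱼ` the hexagon
with `M ⊕ Nʲ = E(hⱼ)` for `j ∈ {1, …, k+l}`, and `hᵢ'` the hexagon with
`Nⁱ ⊕ Oⁱ = E(hᵢ')` for `i ∈ {k+1, …, k+l}`), for all `i ∈ {k+1, …, k+l}` and all
`j ∈ {1, …, k+l}` with `j ≠ i`, the hexagons `hᵢ'` and `hⱼ` are vertex-disjoint. -/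
theorem hexagon_prime_disjoint (B : Set V2) (hB : IsBenzenoid B)
    (hex : ∃ M, IsPM cellVerts cellEdges B M) (k l : ℕ)
    (S : Set (PM cellVerts cellEdges B))
    (hconv : IsConvex (resGraph cellVerts cellEdges B) S)
    (φ : tupleGraph k l ≃g (resGraph cellVerts cellEdges B).induce S)
    (N : Fin k ⊕ Fin l → (Fin k → Fin 2) × (Fin l → Fin 3))
    (hNk : ∀ i : Fin k, N (Sum.inl i) = (fun j => if j = i then 1 else 0, fun _ => 0))
    (hNl : ∀ i : Fin l, N (Sum.inr i) = (fun _ => 0, fun j => if j = i then 1 else 0))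
    (h : Fin k ⊕ Fin l → V2) (hhB : ∀ i, h i ∈ B)
    (hhex : ∀ i, (φ (fun _ => 0, fun _ => 0)).val.val ∆ (φ (N i)).val.val = cellEdges (h i))
    (h' : Fin l → V2) (hh'B : ∀ i, h' i ∈ B)
    (hhex' : ∀ i : Fin l,
      (φ (N (Sum.inr i))).val.val ∆
        (φ (fun _ => 0, fun j => if j = i then 2 else 0)).val.val = cellEdges (h' i)) :
    ∀ (i : Fin l) (j : Fin k ⊕ Fin l), j ≠ Sum.inr i →
      cellVerts (h' i) ∩ cellVerts (h j) = ∅ :=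
  hexagon_prime_disjoint_general B hB k l S φ N hNk hNl h hhex h' hhex'

end GZZ
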